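/- arXiv:2111.13608 — 3 statements merged into one kernel-verified Lean document; each statement's English description precedes it below -/
import Mathlib

section
/- For every constant L > 0, the function f(x, t) = x·t·(2^{L/(x·t)} − 1) is convex on the convex domain {(x, t) ∈ ℝ² : x > 0, t > 0}. (This is the key step showing that, for fixed data allocation L, the joint bandwidth and computing-resource allocation problem is convex.) -/
/-!
With `c = L log 2` and `r = √(x t)` the function is `φ r = r² (exp (c / r²) - 1)`. The geometric
mean `√(x t)` is concave on the quadrant, and for `c ≥ 0` the function `φ` is convex and
nonincreasing on `(0, ∞)`, so `φ (√(x t))` is convex. In terms of `u = c / r²`,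
`φ' r = 2 r ((1 - u) eᵘ - 1)` and `φ'' r = 2 ((1 - u + 2 u²) eᵘ - 1)`, whose signs follow from
`eᵘ ≥ 1 + u`.
-/

open Real Set

theorem concaveOn_sqrt_mul : ConcaveOn ℝ (Ici 0 ×ˢ Ici 0) fun p : ℝ × ℝ => √(p.1 * p.2) := by
  refine ⟨(convex_Ici 0).prod (convex_Ici 0), ?_⟩
  rintro ⟨x₁, y₁⟩ ⟨hx₁, hy₁⟩ ⟨x₂, y₂⟩ ⟨hx₂, hy₂⟩ a b ha hb -
  simp only [mem_Ici] at hx₁ hy₁ hx₂ hy₂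
  obtain ⟨u₁, hu₁, rfl⟩ : ∃ u, 0 ≤ u ∧ u ^ 2 = x₁ := ⟨√x₁, sqrt_nonneg _, sq_sqrt hx₁⟩
  obtain ⟨u₂, hu₂, rfl⟩ : ∃ u, 0 ≤ u ∧ u ^ 2 = x₂ := ⟨√x₂, sqrt_nonneg _, sq_sqrt hx₂⟩
  obtain ⟨v₁, hv₁, rfl⟩ : ∃ v, 0 ≤ v ∧ v ^ 2 = y₁ := ⟨√y₁, sqrt_nonneg _, sq_sqrt hy₁⟩
  obtain ⟨v₂, hv₂, rfl⟩ : ∃ v, 0 ≤ v ∧ v ^ 2 = y₂ := ⟨√y₂, sqrt_nonneg _, sq_sqrt hy₂⟩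
  simp only [smul_eq_mul, Prod.smul_mk, Prod.mk_add_mk, ← mul_pow,
    sqrt_sq (mul_nonneg hu₁ hv₁), sqrt_sq (mul_nonneg hu₂ hv₂)]
  apply le_sqrt_of_sq_le
  nlinarith [mul_nonneg (mul_nonneg ha hb) (sq_nonneg (u₁ * v₂ - u₂ * v₁))]

theorem one_sub_mul_exp_le_one (u : ℝ) : (1 - u) * exp u ≤ 1 := by
  have := mul_le_mul_of_nonneg_right (one_sub_le_exp_neg u) (exp_pos u).le
  rwa [← exp_add, neg_add_cancel, exp_zero] at this

theorem one_le_one_sub_add_two_mul_sq_mul_exp {u : ℝ} (hu : 0 ≤ u) :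
    1 ≤ (1 - u + 2 * u ^ 2) * exp u := by
  have hq : 0 ≤ 1 - u + 2 * u ^ 2 := by nlinarith [sq_nonneg (2 * u - 1)]
  calc (1 : ℝ) ≤ (1 - u + 2 * u ^ 2) * (u + 1) := by nlinarith
    _ ≤ (1 - u + 2 * u ^ 2) * exp u := mul_le_mul_of_nonneg_left (add_one_le_exp u) hq

theorem hasDerivAt_div_sq (c : ℝ) {r : ℝ} (hr : r ≠ 0) :
    HasDerivAt (fun r : ℝ => c / r ^ 2) (-2 * (c / r ^ 2) / r) r := by
  have h : HasDerivAt (fun r : ℝ => c / r ^ 2) _ r :=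
    (hasDerivAt_const r c).div (hasDerivAt_pow 2 r) (pow_ne_zero 2 hr)
  convert h using 1
  field_simp
  ring

theorem HasDerivAt.pow_mul_comp_div_sq {G : ℝ → ℝ} {g' c r : ℝ} (n : ℕ) (hr : r ≠ 0)
    (hG : HasDerivAt G g' (c / r ^ 2)) :
    HasDerivAt (fun r => r ^ n * G (c / r ^ 2))
      (r ^ n / r * (n * G (c / r ^ 2) - 2 * (c / r ^ 2) * g')) r := by
  have h : HasDerivAt (fun r => r ^ n * G (c / r ^ 2)) _ r :=
    (hasDerivAt_pow n r).mul (hG.comp r (hasDerivAt_div_sq c hr))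
  convert h using 1
  rcases n with _ | n
  · simp only [pow_zero, CharP.cast_eq_zero, zero_mul, zero_add, one_mul]
    ring
  · simp only [pow_succ, Nat.add_sub_cancel, Nat.cast_succ]
    field_simp
    ring

theorem hasDerivAt_sq_mul_exp_div_sq_sub_one (c : ℝ) {r : ℝ} (hr : r ≠ 0) :
    HasDerivAt (fun r => r ^ 2 * (exp (c / r ^ 2) - 1))
      (2 * r * ((1 - c / r ^ 2) * exp (c / r ^ 2) - 1)) r := by
  convert ((hasDerivAt_exp (c / r ^ 2)).sub_const 1).pow_mul_comp_div_sq 2 hr using 1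
  field_simp
  ring

theorem convexOn_sq_mul_exp_div_sq_sub_one {c : ℝ} (hc : 0 ≤ c) :
    ConvexOn ℝ (Ioi 0) fun r : ℝ => r ^ 2 * (exp (c / r ^ 2) - 1) := by
  have h'' {r : ℝ} (hr : r ≠ 0) :
      HasDerivAt (fun r => 2 * r * ((1 - c / r ^ 2) * exp (c / r ^ 2) - 1))
        (2 * ((1 - c / r ^ 2 + 2 * (c / r ^ 2) ^ 2) * exp (c / r ^ 2) - 1)) r := by
    have hG : HasDerivAt (fun u => (1 - u) * exp u - 1) (-(c / r ^ 2) * exp (c / r ^ 2))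
        (c / r ^ 2) := by
      have h : HasDerivAt (fun u => (1 - u) * exp u - 1) _ (c / r ^ 2) :=
        (((hasDerivAt_id _).const_sub 1).mul (hasDerivAt_exp _)).sub_const 1
      convert h using 1
      ring
    have h : HasDerivAt (fun r => 2 * (r ^ 1 * ((1 - c / r ^ 2) * exp (c / r ^ 2) - 1))) _ r :=
      (hG.pow_mul_comp_div_sq 1 hr).const_mul 2
    convert h using 1
    · simp only [pow_one, mul_assoc]
    · field_simp
      ring
  refine convexOn_of_hasDerivWithinAt2_nonneg (convex_Ioi 0)
    (f' := fun r => 2 * r * ((1 - c / r ^ 2) * exp (c / r ^ 2) - 1))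
    (f'' := fun r => 2 * ((1 - c / r ^ 2 + 2 * (c / r ^ 2) ^ 2) * exp (c / r ^ 2) - 1))
    (HasDerivAt.continuousOn fun r hr => hasDerivAt_sq_mul_exp_div_sq_sub_one c (ne_of_gt hr))
    (fun r hr => ?_) (fun r hr => ?_) (fun r hr => ?_) <;> simp only [interior_Ioi, mem_Ioi] at hr ⊢
  · exact (hasDerivAt_sq_mul_exp_div_sq_sub_one c (ne_of_gt hr)).hasDerivWithinAt
  · exact (h'' (ne_of_gt hr)).hasDerivWithinAt
  · have := one_le_one_sub_add_two_mul_sq_mul_exp (div_nonneg hc (sq_nonneg r))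
    linarith

theorem antitoneOn_sq_mul_exp_div_sq_sub_one (c : ℝ) :
    AntitoneOn (fun r : ℝ => r ^ 2 * (exp (c / r ^ 2) - 1)) (Ioi 0) := by
  refine antitoneOn_of_hasDerivWithinAt_nonpos (convex_Ioi 0)
    (f' := fun r => 2 * r * ((1 - c / r ^ 2) * exp (c / r ^ 2) - 1))
    (HasDerivAt.continuousOn fun r hr => hasDerivAt_sq_mul_exp_div_sq_sub_one c (ne_of_gt hr))
    (fun r hr => ?_) (fun r hr => ?_) <;> simp only [interior_Ioi, mem_Ioi] at hr ⊢
  · exact (hasDerivAt_sq_mul_exp_div_sq_sub_one c (ne_of_gt hr)).hasDerivWithinAt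
  · exact mul_nonpos_of_nonneg_of_nonpos (by positivity)
      (sub_nonpos.2 (one_sub_mul_exp_le_one _))

/-- For every `L > 0`, the function `(x, t) ↦ x t (2^{L/(x t)} − 1)` is convex
on `{(x, t) : x > 0, t > 0}`. -/
theorem energy_convex_in_x_t (L : ℝ) (hL : 0 < L) :
    ConvexOn ℝ {p : ℝ × ℝ | 0 < p.1 ∧ 0 < p.2}
      (fun p : ℝ × ℝ => p.1 * p.2 * ((2 : ℝ) ^ (L / (p.1 * p.2)) - 1)) := by
  have hc : 0 ≤ log 2 * L := mul_nonneg (log_nonneg one_le_two) hL.le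
  have himage : (fun p : ℝ × ℝ => √(p.1 * p.2)) '' {p : ℝ × ℝ | 0 < p.1 ∧ 0 < p.2} = Ioi 0 := by
    ext r
    constructor
    · rintro ⟨p, ⟨hp₁, hp₂⟩, rfl⟩
      exact sqrt_pos.2 (mul_pos hp₁ hp₂)
    · exact fun hr => ⟨(r, r), ⟨hr, hr⟩, sqrt_mul_self (le_of_lt hr)⟩
  have hmean : ConcaveOn ℝ {p : ℝ × ℝ | 0 < p.1 ∧ 0 < p.2} fun p : ℝ × ℝ => √(p.1 * p.2) :=
    concaveOn_sqrt_mul.subset (fun p hp => ⟨le_of_lt hp.1, le_of_lt hp.2⟩)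
      ((convex_Ioi 0).prod (convex_Ioi 0))
  refine ((himage ▸ convexOn_sq_mul_exp_div_sq_sub_one hc).comp_concaveOn hmean
    (himage ▸ antitoneOn_sq_mul_exp_div_sq_sub_one _)).congr ?_
  rintro ⟨x, t⟩ ⟨hx, ht⟩
  simp only [Function.comp_apply, sq_sqrt (mul_pos hx ht).le, rpow_def_of_pos two_pos,
    mul_div_assoc]
end

section
/- For every u > 0, the inequality ((ln 2)²·u²·2^u)² > (2^u − 1 + (ln 2)²·u²·2^u − (ln 2)·u·2^u)² holds. (This is the positivity of the Hessian determinant of (x, t) ↦ x·t·(2^{L/(x·t)} − 1) at any point with u = L/(x·t) > 0, which proves the joint convexity claimed in Theorem 5 of the paper.) -/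
/-- For every `u > 0`,
`((ln 2)² u² 2^u)² > (2^u − 1 + (ln 2)² u² 2^u − (ln 2) u 2^u)²`. -/
theorem hessian_det_pos (u : ℝ) (hu : 0 < u) :
    (Real.log 2 ^ 2 * u ^ 2 * (2 : ℝ) ^ u) ^ 2 >
      ((2 : ℝ) ^ u - 1 + Real.log 2 ^ 2 * u ^ 2 * (2 : ℝ) ^ u
        - Real.log 2 * u * (2 : ℝ) ^ u) ^ 2 := by
  set c := Real.log 2 * u with hcdef
  have hc0 : 0 < c := mul_pos (Real.log_pos (by norm_num)) hu
  have hE : (2 : ℝ) ^ u = Real.exp c := by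
    rw [Real.rpow_def_of_pos (by norm_num), hcdef]
  set E := Real.exp c with hEdef
  have hE0 : 0 < E := Real.exp_pos c
  have h1 : c * E - E + 1 > 0 := by
    have hlt : -c + 1 < Real.exp (-c) := Real.add_one_lt_exp (by linarith)
    have hinv : Real.exp (-c) * E = 1 := by
      rw [hEdef, ← Real.exp_add]; simp
    nlinarith [mul_pos (Real.exp_pos (-c)) hE0]
  have h2 : c + 1 < E := Real.add_one_lt_exp (ne_of_gt hc0)
  have hcsq : Real.log 2 ^ 2 * u ^ 2 = c ^ 2 := by rw [hcdef]; ring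
  rw [hE, hcsq]
  have h3 : 2 * c ^ 2 * E + E - 1 - c * E > 0 := by
    nlinarith [mul_pos hc0 h1, mul_pos (mul_pos hc0 hc0) hE0]
  nlinarith [mul_pos h1 h3]
end

section
/- Fix L > 0, x > 0, W > 0, D > 0 and μ ≥ 0. The function v(t) = x·[2^{L/(x·t)} − (L/(x·t))·(ln 2)·2^{L/(x·t)} − 1] + μ·W/(D − t)² is strictly monotonically increasing on the interval (0, D). (Hence, in the Computing resource Allocation Algorithm, for each multiplier μ the KKT equation v(t) = 0 has at most one root in (0, D) and can be solved by bisection.) -/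
/-!
Writing `2^s = exp (s ln 2)` and `k = L ln 2 / x`, the rate term is `x ((1 - k/t) e^{k/t} - 1)`.
Since `(1 - u) eᵘ` has derivative `-u eᵘ < 0` for `u > 0` and `k/t` decreases in `t`, this term is
strictly increasing; the multiplier term `μW/(D - t)²` is nondecreasing on `t < D`.
-/

open Real Set

theorem strictAntiOn_one_sub_mul_exp :
    StrictAntiOn (fun u : ℝ => (1 - u) * exp u) (Ici 0) := by
  refine strictAntiOn_of_deriv_neg (convex_Ici 0) (by fun_prop) fun u hu => ?_
  rw [interior_Ici] at hu
  have hderiv : HasDerivAt (fun u : ℝ => (1 - u) * exp u) (-(u * exp u)) u :=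
    (((hasDerivAt_id' u).const_sub 1).mul (hasDerivAt_exp u)).congr_deriv (by ring)
  rw [hderiv.deriv]
  exact neg_neg_of_pos (mul_pos hu (exp_pos u))

theorem strictMonoOn_one_sub_div_mul_exp_div {c : ℝ} (hc : 0 < c) :
    StrictMonoOn (fun t : ℝ => (1 - c / t) * exp (c / t)) (Ioi 0) :=
  strictAntiOn_one_sub_mul_exp.comp (fun _ ha _ _ hab => div_lt_div_of_pos_left hc ha hab)
    fun _ ht => (div_pos hc ht).le

theorem monotoneOn_div_sub_sq {c : ℝ} (hc : 0 ≤ c) (D : ℝ) :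
    MonotoneOn (fun t : ℝ => c / (D - t) ^ 2) (Iio D) := fun a _ b hb hab => by
  have hDb : 0 < D - b := sub_pos.mpr hb
  dsimp only
  gcongr

theorem kkt_computing_strictMono_general (L x W D μ : ℝ) (hL : 0 < L) (hx : 0 < x)
    (hW : 0 < W) (hμ : 0 ≤ μ) :
    StrictMonoOn
      (fun t : ℝ =>
        x * ((2 : ℝ) ^ (L / (x * t))
          - L / (x * t) * Real.log 2 * (2 : ℝ) ^ (L / (x * t)) - 1)
        + μ * W / (D - t) ^ 2)
      (Set.Ioo 0 D) := by
  set k := L * log 2 / x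
  have hk : 0 < k := div_pos (mul_pos hL (log_pos one_lt_two)) hx
  have hrate : StrictMonoOn (fun t : ℝ => x * ((1 - k / t) * exp (k / t) - 1)) (Ioi 0) :=
    fun a ha b hb hab => mul_lt_mul_of_pos_left
      (sub_lt_sub_right (strictMonoOn_one_sub_div_mul_exp_div hk ha hb hab) 1) hx
  refine ((hrate.mono Ioo_subset_Ioi_self).add_monotone
    ((monotoneOn_div_sub_sq (mul_nonneg hμ hW.le) D).mono Ioo_subset_Iio_self)).congr
    fun t _ => ?_
  have hexponent : k / t = log 2 * (L / (x * t)) := by ring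
  simp only [hexponent, rpow_def_of_pos two_pos]
  ring

/-- For fixed `L, x, W, D > 0` and `μ ≥ 0`, the function
`v(t) = x [2^{L/(x t)} − (L/(x t)) ln 2 · 2^{L/(x t)} − 1] + μ W/(D − t)²`
is strictly increasing on `(0, D)`. -/
theorem kkt_computing_strictMono (L x W D μ : ℝ) (hL : 0 < L) (hx : 0 < x)
    (hW : 0 < W) (hD : 0 < D) (hμ : 0 ≤ μ) :
    StrictMonoOn
      (fun t : ℝ =>
        x * ((2 : ℝ) ^ (L / (x * t))
          - L / (x * t) * Real.log 2 * (2 : ℝ) ^ (L / (x * t)) - 1)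
        + μ * W / (D - t) ^ 2)
      (Set.Ioo 0 D) :=
  kkt_computing_strictMono_general L x W D μ hL hx hW hμ
end
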